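/- arXiv:1212.1252 — 2 statements merged into one kernel-verified Lean document; each statement's English description precedes it below -/
import Mathlib

section
/- Let m ≥ 4 be an integer, α the largest real root of f_m(x) = x³ - m·x² - (m+1)·x - 1, and K_m = ℚ(α). Define ρ = -(1/D_m)·[(m³ + 5m² + 5m + 4) + (2m³ + 7m² + 7m + 9)·α - 2(m² + 3m + 3)·α²] ∈ K_m, where D_m = (m² + m - 3)² - 32. Then Tr_{K_m/ℚ}(ρ) = 0, Tr_{K_m/ℚ}(α·ρ) = 0, and Tr_{K_m/ℚ}(α²·ρ) = 1; that is, ρ is the third element of the dual basis of {1, α, α²} with respect to the trace form. -/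
/-!
`f_m` has no root `±1`, so it is irreducible over `ℚ` and `1, α, α²` is a basis of `K_m` in
which multiplication by `α` is the companion matrix of `f_m`. Hence `Tr(α^k)` is the `k`-th power
sum of the roots of `f_m`: the traces of the first three powers of the companion matrix, then
Newton's recurrence. Each `Tr(α^k ρ)` is thereby a polynomial in `m` divided by `D_m`, which is the
discriminant of `f_m` and nonzero since `32` is not a square; for `k = 0, 1, 2` the numerator is
`0`, `0` and `D_m`.
-/

open IntermediateField Polynomial

noncomputable def familyCubic {R : Type*} [CommRing R] (m : R) : R[X] :=
  X ^ 3 - C m * X ^ 2 - C (m + 1) * X - C 1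

theorem familyCubic_monic {R : Type*} [CommRing R] (m : R) : (familyCubic m).Monic := by
  unfold familyCubic; monicity!

theorem familyCubic_natDegree {R : Type*} [CommRing R] [Nontrivial R] (m : R) :
    (familyCubic m).natDegree = 3 := by
  unfold familyCubic; compute_degree!

theorem familyCubic_irreducible_int (m : ℤ) : Irreducible (familyCubic m) := by
  rw [(familyCubic_monic m).irreducible_iff_roots_eq_zero_of_degree_le_three
    (by rw [familyCubic_natDegree]; norm_num) (by rw [familyCubic_natDegree])]
  refine Multiset.eq_zero_of_forall_notMem fun r hr => ?_
  have hroot : r ^ 3 - m * r ^ 2 - (m + 1) * r - 1 = 0 := by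
    simpa [familyCubic] using (mem_roots (familyCubic_monic m).ne_zero).mp hr
  have hunit : IsUnit r := .of_mul_eq_one (r ^ 2 - m * r - (m + 1)) (by linear_combination hroot)
  rcases Int.isUnit_iff.mp hunit with rfl | rfl <;> omega

theorem familyCubic_irreducible_rat (m : ℤ) : Irreducible (familyCubic (m : ℚ)) := by
  have hmap : (familyCubic m).map (Int.castRingHom ℚ) = familyCubic (m : ℚ) := by
    simp [familyCubic]
  rw [← hmap]
  exact (familyCubic_monic m).irreducible_iff_irreducible_map_fraction_map.mp
    (familyCubic_irreducible_int m)

theorem aeval_familyCubic_eq_zero {m : ℤ} {α : ℝ}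
    (hroot : α ^ 3 - (m : ℝ) * α ^ 2 - ((m : ℝ) + 1) * α - 1 = 0) :
    aeval α (familyCubic (m : ℚ)) = 0 := by
  simpa [familyCubic] using hroot

theorem minpoly_eq_familyCubic {m : ℤ} {α : ℝ}
    (hroot : α ^ 3 - (m : ℝ) * α ^ 2 - ((m : ℝ) + 1) * α - 1 = 0) :
    minpoly ℚ α = familyCubic (m : ℚ) :=
  (minpoly.eq_of_irreducible_of_monic (familyCubic_irreducible_rat m)
    (aeval_familyCubic_eq_zero hroot) (familyCubic_monic _)).symm

-- `(m² + m - 3)² - 32` is the discriminant of `familyCubic m`.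
theorem familyCubic_discr_ne_zero (m : ℤ) : ((m : ℚ) ^ 2 + m - 3) ^ 2 - 32 ≠ 0 := by
  intro h
  have hn : (m ^ 2 + m - 3) ^ 2 = (32 : ℤ) := by exact_mod_cast sub_eq_zero.mp h
  generalize m ^ 2 + m - 3 = n at hn
  have : -6 < n := by nlinarith
  have : n < 6 := by nlinarith
  interval_cases n <;> omega

-- The power sums of the roots of `X³ - a X² - b X - c`, by Newton's identities.
def cubicPowerSum {R : Type*} [CommRing R] (a b c : R) : ℕ → R
  | 0 => 3
  | 1 => a
  | 2 => a ^ 2 + 2 * b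
  | k + 3 => a * cubicPowerSum a b c (k + 2) + b * cubicPowerSum a b c (k + 1) +
      c * cubicPowerSum a b c k

section CubicGenerator

variable {R S : Type*} [CommRing R] [CommRing S] [Algebra R S] {θ : S} {a b c : R}

theorem leftMulMatrix_eq_companion (B : Module.Basis (Fin 3) R S) (hB : ∀ i, B i = θ ^ (i : ℕ))
    (hθ : θ ^ 3 = algebraMap R S a * θ ^ 2 + algebraMap R S b * θ + algebraMap R S c) :
    Algebra.leftMulMatrix B θ = !![0, 0, c; 1, 0, b; 0, 1, a] := by
  have h0 : θ * B 0 = B 1 := by simp [hB]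
  have h1 : θ * B 1 = B 2 := by simp [hB, pow_two]
  have h2 : θ * B 2 = c • B 0 + b • B 1 + a • B 2 := by
    simp only [hB, Algebra.smul_def, Fin.val_zero, Fin.val_one, Fin.val_two]
    linear_combination hθ
  ext i j
  fin_cases i <;> fin_cases j <;> simp [Algebra.leftMulMatrix_eq_repr_mul, h0, h1, h2]

theorem trace_pow_add_three
    (hθ : θ ^ 3 = algebraMap R S a * θ ^ 2 + algebraMap R S b * θ + algebraMap R S c) (k : ℕ) :
    Algebra.trace R S (θ ^ (k + 3)) = a * Algebra.trace R S (θ ^ (k + 2)) +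
      b * Algebra.trace R S (θ ^ (k + 1)) + c * Algebra.trace R S (θ ^ k) := by
  have hpow : θ ^ (k + 3) = a • θ ^ (k + 2) + b • θ ^ (k + 1) + c • θ ^ k := by
    simp only [Algebra.smul_def]
    linear_combination θ ^ k * hθ
  simp [hpow]

theorem trace_pow_eq_cubicPowerSum (B : Module.Basis (Fin 3) R S) (hB : ∀ i, B i = θ ^ (i : ℕ))
    (hθ : θ ^ 3 = algebraMap R S a * θ ^ 2 + algebraMap R S b * θ + algebraMap R S c) :
    ∀ k, Algebra.trace R S (θ ^ k) = cubicPowerSum a b c k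
  | 0 | 1 => by
    simp [Algebra.trace_eq_matrix_trace B, leftMulMatrix_eq_companion B hB hθ, cubicPowerSum]
  | 2 => by
    simp [Algebra.trace_eq_matrix_trace B, leftMulMatrix_eq_companion B hB hθ, cubicPowerSum,
      pow_two, Matrix.trace_fin_three]
    ring
  | k + 3 => by
    rw [trace_pow_add_three hθ, trace_pow_eq_cubicPowerSum B hB hθ (k + 2),
      trace_pow_eq_cubicPowerSum B hB hθ (k + 1), trace_pow_eq_cubicPowerSum B hB hθ k,
      cubicPowerSum]

theorem trace_pow_mul_quadratic (θ : S) (d q₀ q₁ q₂ : R) (k : ℕ) :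
    Algebra.trace R S (θ ^ k * (algebraMap R S d * (algebraMap R S q₀ +
      algebraMap R S q₁ * θ + algebraMap R S q₂ * θ ^ 2))) =
      d * (q₀ * Algebra.trace R S (θ ^ k) + q₁ * Algebra.trace R S (θ ^ (k + 1)) +
        q₂ * Algebra.trace R S (θ ^ (k + 2))) := by
  have hexpand : θ ^ k * (algebraMap R S d * (algebraMap R S q₀ + algebraMap R S q₁ * θ +
      algebraMap R S q₂ * θ ^ 2)) = d • (q₀ • θ ^ k + q₁ • θ ^ (k + 1) + q₂ • θ ^ (k + 2)) := by
    simp only [Algebra.smul_def]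
    ring
  rw [hexpand]
  simp only [map_add, map_smul, smul_eq_mul]

end CubicGenerator

theorem PowerBasis.trace_gen_pow_eq_cubicPowerSum {K S : Type*} [Field K] [CommRing S]
    [Algebra K S] (pb : PowerBasis K S) {a b c : K}
    (h : minpoly K pb.gen = X ^ 3 - C a * X ^ 2 - C b * X - C c) (k : ℕ) :
    Algebra.trace K S (pb.gen ^ k) = cubicPowerSum a b c k := by
  have hdim : pb.dim = 3 := by
    rw [← pb.natDegree_minpoly, h]; compute_degree!
  have hθ : pb.gen ^ 3 = algebraMap K S a * pb.gen ^ 2 + algebraMap K S b * pb.gen +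
      algebraMap K S c := by
    have hzero := minpoly.aeval K pb.gen
    rw [h] at hzero
    simp only [map_sub, map_mul, map_pow, aeval_X, aeval_C] at hzero
    linear_combination hzero
  exact trace_pow_eq_cubicPowerSum (pb.basis.reindex (finCongr hdim)) (fun i => by simp) hθ k

theorem IntermediateField.trace_adjoinSimple_gen_pow_eq_cubicPowerSum {K L : Type*} [Field K]
    [Field L] [Algebra K L] {x : L} (hx : IsIntegral K x) {a b c : K}
    (h : minpoly K x = X ^ 3 - C a * X ^ 2 - C b * X - C c) (k : ℕ) :
    Algebra.trace K K⟮x⟯ (AdjoinSimple.gen K x ^ k) = cubicPowerSum a b c k :=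
  (adjoin.powerBasis hx).trace_gen_pow_eq_cubicPowerSum
    (by rwa [adjoin.powerBasis_gen, minpoly_gen]) k

theorem dual_basis_element_general (m : ℤ) (α : ℝ)
    (hroot : α ^ 3 - (m : ℝ) * α ^ 2 - ((m : ℝ) + 1) * α - 1 = 0)
    (ρ : ℚ⟮α⟯)
    (hρ : ρ = -(1 / (((m : ℚ⟮α⟯) ^ 2 + m - 3) ^ 2 - 32)) *
        (((m : ℚ⟮α⟯) ^ 3 + 5 * m ^ 2 + 5 * m + 4) +
          ((2 : ℚ⟮α⟯) * m ^ 3 + 7 * m ^ 2 + 7 * m + 9) * AdjoinSimple.gen ℚ α -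
          2 * ((m : ℚ⟮α⟯) ^ 2 + 3 * m + 3) * AdjoinSimple.gen ℚ α ^ 2)) :
    Algebra.trace ℚ ℚ⟮α⟯ ρ = 0 ∧
      Algebra.trace ℚ ℚ⟮α⟯ (AdjoinSimple.gen ℚ α * ρ) = 0 ∧
      Algebra.trace ℚ ℚ⟮α⟯ (AdjoinSimple.gen ℚ α ^ 2 * ρ) = 1 := by
  have hint : IsIntegral ℚ α :=
    ⟨familyCubic (m : ℚ), familyCubic_monic _, aeval_familyCubic_eq_zero hroot⟩
  set θ := AdjoinSimple.gen ℚ α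
  -- `ℚ⟮α⟯` carries two defeq but syntactically different `ℚ`-algebra structures
  -- (`IntermediateField.algebra'`, `DivisionRing.toRatAlgebra`); the ascription selects the goal's.
  have htr (k : ℕ) : Algebra.trace ℚ ℚ⟮α⟯ (θ ^ k) = cubicPowerSum (m : ℚ) (m + 1) 1 k :=
    trace_adjoinSimple_gen_pow_eq_cubicPowerSum hint
      (by rw [minpoly_eq_familyCubic hroot, familyCubic]) k
  have hρ' : ρ = algebraMap ℚ _ (-(1 / (((m : ℚ) ^ 2 + m - 3) ^ 2 - 32))) *
      (algebraMap ℚ _ ((m : ℚ) ^ 3 + 5 * m ^ 2 + 5 * m + 4) +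
        algebraMap ℚ _ (2 * (m : ℚ) ^ 3 + 7 * m ^ 2 + 7 * m + 9) * θ +
        algebraMap ℚ _ (-2 * ((m : ℚ) ^ 2 + 3 * m + 3)) * θ ^ 2) := by
    rw [hρ]
    simp only [map_neg, map_div₀, map_one, map_sub, map_add, map_mul, map_pow, map_intCast,
      map_ofNat]
    ring
  have key (k : ℕ) := hρ' ▸ trace_pow_mul_quadratic θ _ _ _ _ k
  have h0 := key 0
  have h1 := key 1
  have h2 := key 2
  simp only [htr, cubicPowerSum] at h0 h1 h2
  rw [pow_zero, one_mul] at h0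
  rw [pow_one] at h1
  refine ⟨h0.trans (by ring), h1.trans (by ring), h2.trans ?_⟩
  linear_combination mul_inv_cancel₀ (familyCubic_discr_ne_zero m)

/-- Let `m ≥ 4` be an integer, `α` the largest real root of
`f_m(x) = x³ - m·x² - (m+1)·x - 1`, `K_m = ℚ(α)` and `D_m = (m² + m - 3)² - 32`.  Set
`ρ = -(1/D_m)·[(m³ + 5m² + 5m + 4) + (2m³ + 7m² + 7m + 9)·α - 2(m² + 3m + 3)·α²] ∈ K_m`.
Then `Tr(ρ) = 0`, `Tr(α·ρ) = 0` and `Tr(α²·ρ) = 1`, i.e. `ρ` is the third element of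
the dual basis of `{1, α, α²}` with respect to the trace form. -/
theorem dual_basis_element (m : ℤ) (hm : 4 ≤ m) (α : ℝ)
    (hroot : α ^ 3 - (m : ℝ) * α ^ 2 - ((m : ℝ) + 1) * α - 1 = 0)
    (hmax : ∀ β : ℝ, β ^ 3 - (m : ℝ) * β ^ 2 - ((m : ℝ) + 1) * β - 1 = 0 → β ≤ α)
    [FiniteDimensional ℚ ℚ⟮α⟯]
    (ρ : ℚ⟮α⟯)
    (hρ : ρ = -(1 / (((m : ℚ⟮α⟯) ^ 2 + m - 3) ^ 2 - 32)) *
        (((m : ℚ⟮α⟯) ^ 3 + 5 * m ^ 2 + 5 * m + 4) +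
          ((2 : ℚ⟮α⟯) * m ^ 3 + 7 * m ^ 2 + 7 * m + 9) * AdjoinSimple.gen ℚ α -
          2 * ((m : ℚ⟮α⟯) ^ 2 + 3 * m + 3) * AdjoinSimple.gen ℚ α ^ 2)) :
    Algebra.trace ℚ ℚ⟮α⟯ ρ = 0 ∧
      Algebra.trace ℚ ℚ⟮α⟯ (AdjoinSimple.gen ℚ α * ρ) = 0 ∧
      Algebra.trace ℚ ℚ⟮α⟯ (AdjoinSimple.gen ℚ α ^ 2 * ρ) = 1 :=
  dual_basis_element_general m α hroot ρ hρ
end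

section
/- For every integer m ≥ 4 and every pair (s,t) in the set T = {(1,t) : 1 ≤ t ≤ m-1} ∪ {(s,t) : 2 ≤ s ≤ m-2, s ≤ t ≤ m} ∪ {(m-1,m)}, one has f_m(s,t) > 1, where f_m(s,t) = (-s² + (t+1)s)m² + ((t-2)s² - (t² - t)s - (t² + t))m + (s³ - 2s² - (t² - 3t - 1)s + t³ - t - 1). -/
/-- The two-variable integer polynomial `f_m(s,t)`. -/
def fst (m s t : ℤ) : ℤ :=
  (-s ^ 2 + (t + 1) * s) * m ^ 2 +
    ((t - 2) * s ^ 2 - (t ^ 2 - t) * s - (t ^ 2 + t)) * m +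
    (s ^ 3 - 2 * s ^ 2 - (t ^ 2 - 3 * t - 1) * s + t ^ 3 - t - 1)

/-- The set `T` of integer pairs associated with `m`. -/
def Tset (m : ℤ) : Set (ℤ × ℤ) :=
  {p | (p.1 = 1 ∧ 1 ≤ p.2 ∧ p.2 ≤ m - 1) ∨
    (2 ≤ p.1 ∧ p.1 ≤ m - 2 ∧ p.1 ≤ p.2 ∧ p.2 ≤ m) ∨ p = (m - 1, m)}

/-!
In the coordinates `c = t - s ≥ 0` and `d = m - t ≥ 0` the polynomial
becomes `f = c B + s d (d - 1) - 1` with `B = (s - 1)(c + 1)(d + 1) + s d (d + s)`, a sum of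
nonnegative terms up to the `-1`. For `s ≥ 2` and `c + d ≥ 2` one has `B ≥ (c + 1)(d + 1) ≥ 3`,
which settles `c ≥ 1`, while `c = 0` forces `d ≥ 2` and `s d (d - 1) ≥ 4`. For `s = 1`, where
`c + d = m - 1 ≥ 3`, the polynomial is `(c + d - 3)(d + 1) + c (d - 1)(d + 1) + d + 2`, and at the
corner `(m - 1, m)` it is `2 m - 5`.
-/

def fstShifted (s c d : ℤ) : ℤ :=
  c * ((s - 1) * (c + 1) * (d + 1) + s * d * (d + s)) + s * (d * (d - 1)) - 1

theorem fst_eq_fstShifted (m s t : ℤ) : fst m s t = fstShifted s (t - s) (m - t) := by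
  unfold fst fstShifted
  ring

theorem fstShifted_one (c d : ℤ) :
    fstShifted 1 c d = (c + d - 3) * (d + 1) + c * (d - 1) * (d + 1) + d + 2 := by
  unfold fstShifted
  ring

theorem fstShifted_one_zero (s : ℤ) : fstShifted s 1 0 = 2 * s - 3 := by
  unfold fstShifted
  ring

theorem one_lt_fstShifted_one {c d : ℤ} (hc : 0 ≤ c) (hd : 1 ≤ d) (hcd : 3 ≤ c + d) :
    1 < fstShifted 1 c d := by
  have h₁ : 0 ≤ (c + d - 3) * (d + 1) := mul_nonneg (by linarith) (by linarith)
  have h₂ : 0 ≤ c * (d - 1) * (d + 1) := mul_nonneg (mul_nonneg hc (by linarith)) (by linarith)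
  rw [fstShifted_one]
  linarith

theorem one_lt_fstShifted {s c d : ℤ} (hs : 2 ≤ s) (hc : 0 ≤ c) (hd : 0 ≤ d) (hcd : 2 ≤ c + d) :
    1 < fstShifted s c d := by
  unfold fstShifted
  rcases hc.eq_or_lt with rfl | hc
  · have hdd : 2 ≤ d * (d - 1) := by nlinarith
    nlinarith
  · have hdd : 0 ≤ d * (d - 1) := by
      rcases hd.eq_or_lt with rfl | hd
      · simp
      · exact mul_nonneg hd.le (by linarith)
    have hB : 3 ≤ (s - 1) * (c + 1) * (d + 1) + s * d * (d + s) := by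
      have h₁ : 0 ≤ (s - 2) * ((c + 1) * (d + 1)) :=
        mul_nonneg (by linarith) (mul_nonneg (by linarith) (by linarith))
      have h₂ : 0 ≤ s * d * (d + s) := mul_nonneg (mul_nonneg (by linarith) hd) (by linarith)
      linarith [mul_nonneg hc.le hd]
    nlinarith [mul_le_mul_of_nonneg_left hB hc.le]

/-- For every integer `m ≥ 4` and every `(s,t) ∈ T`, one has `f_m(s,t) > 1`. -/
theorem fst_gt_one (m : ℤ) (hm : 4 ≤ m) (s t : ℤ) (hst : (s, t) ∈ Tset m) :
    1 < fst m s t := by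
  rw [fst_eq_fstShifted]
  rcases hst with ⟨rfl, ht₁, ht₂⟩ | ⟨hs₂, hsm, hts, htm⟩ | hcorner
  · exact one_lt_fstShifted_one (by linarith) (by linarith) (by linarith)
  · exact one_lt_fstShifted hs₂ (by linarith) (by linarith) (by linarith)
  · obtain ⟨hs, ht⟩ : s = m - 1 ∧ t = m := Prod.mk.inj hcorner
    rw [hs, ht, show m - (m - 1) = 1 by ring, sub_self, fstShifted_one_zero]
    linarith
end
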